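/- arXiv:2505.08729 — 2 statements merged into one kernel-verified Lean document; each statement's English description precedes it below -/
import Mathlib

section
/- Let g : Ω → ℝ^{K-1} be a random vector such that for every sign vector s ∈ {-1,+1}^{K-1}, the event {sgn(g) = s componentwise} has positive probability, and such that g has finite moment generating function everywhere. Then the function λ ↦ E[exp(⟨g, λ⟩)] diverges to infinity as ‖λ‖ → ∞. More precisely, there exist ε > 0 and c > 0 such that E[exp(⟨g, λ⟩)] ≥ c·exp(ε‖λ‖₁) for all λ ∈ ℝ^{K-1}. -/
open MeasureTheory Real Filter

/-! Discretize the sign patterns with margins: for each pattern `s`, the event that every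
coordinate of `g` has sign `s` with margin `δ` increases to the strict sign event as `δ ↓ 0`, so
by continuity of measure and finiteness of the set of patterns a single `δ > 0` makes all these
events have probability at least some `c > 0`. Given `l`, on the event for the sign pattern of
`l` one has `⟨g, l⟩ ≥ δ ‖l‖₁`, and Markov's inequality gives `E[exp ⟨g, l⟩] ≥ c exp (δ ‖l‖₁)`. -/

section SignMargin

variable {Ω ι : Type*} (g : Ω → ι → ℝ)

def signMarginSet (s : ι → Bool) (δ : ℝ) : Set Ω :=
  {ω | ∀ i, if s i then δ ≤ g ω i else g ω i ≤ -δ}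

variable {g}

theorem signMarginSet_anti (s : ι → Bool) : Antitone (signMarginSet g s) := by
  intro δ δ' h ω hω i
  specialize hω i
  split_ifs at hω ⊢ <;> linarith

theorem iUnion_signMarginSet_eq [Finite ι] (s : ι → Bool) :
    ⋃ n : ℕ, signMarginSet g s (1 / (n + 1)) =
      {ω | ∀ i, if s i then 0 < g ω i else g ω i < 0} := by
  ext ω
  simp only [Set.mem_iUnion, Set.mem_ofPred_eq, signMarginSet]
  constructor
  · rintro ⟨n, hn⟩ i
    have hpos : (0 : ℝ) < 1 / (n + 1) := Nat.one_div_pos_of_nat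
    specialize hn i
    split_ifs at hn ⊢ <;> linarith
  · intro hω
    have hsmall : ∀ i, ∀ᶠ n : ℕ in atTop, 1 / ((n : ℝ) + 1) < |g ω i| := fun i =>
      tendsto_one_div_add_atTop_nhds_zero_nat.eventually_lt_const
        (abs_pos.2 <| by
          specialize hω i
          split_ifs at hω
          exacts [hω.ne', hω.ne])
    obtain ⟨n, hn⟩ := (eventually_all.2 hsmall).exists
    refine ⟨n, fun i => ?_⟩
    specialize hω i
    specialize hn i
    split_ifs at hω ⊢
    · rw [abs_of_pos hω] at hn; exact hn.le
    · rw [abs_of_neg hω] at hn; linarith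

theorem exists_pos_forall_measure_signMarginSet_pos [Finite ι] [MeasurableSpace Ω]
    (P : Measure Ω)
    (hsign : ∀ s : ι → Bool, 0 < P {ω | ∀ i, if s i then 0 < g ω i else g ω i < 0}) :
    ∃ δ > 0, ∀ s, 0 < P (signMarginSet g s δ) := by
  have hev (s : ι → Bool) : ∀ᶠ n : ℕ in atTop, 0 < P (signMarginSet g s (1 / (n + 1))) := by
    have hmono : Monotone fun n : ℕ => signMarginSet g s (1 / (n + 1)) := fun m n h =>
      signMarginSet_anti s (Nat.one_div_le_one_div h)
    have hlim := tendsto_measure_iUnion_atTop (μ := P) hmono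
    rw [iUnion_signMarginSet_eq] at hlim
    exact hlim.eventually_const_lt (hsign s)
  obtain ⟨n, hn⟩ := (eventually_all.2 hev).exists
  exact ⟨1 / (n + 1), Nat.one_div_pos_of_nat, hn⟩

noncomputable def signPattern (l : ι → ℝ) : ι → Bool := fun i => decide (0 ≤ l i)

theorem mul_sum_abs_le_sum_mul_of_mem_signMarginSet [Fintype ι] {l : ι → ℝ} {δ : ℝ}
    {ω : Ω} (hω : ω ∈ signMarginSet g (signPattern l) δ) : δ * ∑ i, |l i| ≤ ∑ i, g ω i * l i := by
  rw [Finset.mul_sum]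
  refine Finset.sum_le_sum fun i _ => ?_
  have hωi := hω i
  by_cases h : 0 ≤ l i
  · simp only [signPattern, h, decide_true, if_true] at hωi
    rw [abs_of_nonneg h]
    exact mul_le_mul_of_nonneg_right hωi h
  · simp only [signPattern, h, decide_false, Bool.false_eq_true, if_false] at hωi
    rw [abs_of_neg (not_le.1 h)]
    nlinarith

end SignMargin

theorem mgf_lower_bound_of_sign_patterns_general
    {Ω : Type*} [MeasurableSpace Ω] (P : Measure Ω) [IsProbabilityMeasure P]
    {K : ℕ} (g : Ω → Fin K → ℝ)
    (hmgf : ∀ l : Fin K → ℝ, Integrable (fun ω => Real.exp (∑ i, g ω i * l i)) P)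
    (hsign : ∀ s : Fin K → Bool,
      0 < P {ω | ∀ i, if s i then 0 < g ω i else g ω i < 0}) :
    ∃ ε > 0, ∃ c > 0, ∀ l : Fin K → ℝ,
      c * Real.exp (ε * ∑ i, |l i|) ≤ ∫ ω, Real.exp (∑ i, g ω i * l i) ∂P := by
  obtain ⟨δ, hδ, hpos⟩ := exists_pos_forall_measure_signMarginSet_pos P hsign
  obtain ⟨s₀, hs₀⟩ := Finite.exists_min fun s => P.real (signMarginSet g s δ)
  refine ⟨δ, hδ, P.real (signMarginSet g s₀ δ),
    ENNReal.toReal_pos (hpos s₀).ne' (measure_ne_top _ _), fun l => ?_⟩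
  have hsub : signMarginSet g (signPattern l) δ ⊆
      {ω | Real.exp (δ * ∑ i, |l i|) ≤ Real.exp (∑ i, g ω i * l i)} := fun ω hω =>
    Real.exp_le_exp.2 (mul_sum_abs_le_sum_mul_of_mem_signMarginSet hω)
  calc P.real (signMarginSet g s₀ δ) * Real.exp (δ * ∑ i, |l i|)
      ≤ Real.exp (δ * ∑ i, |l i|) * P.real (signMarginSet g (signPattern l) δ) := by
        rw [mul_comm]; exact mul_le_mul_of_nonneg_left (hs₀ _) (exp_pos _).le
    _ ≤ Real.exp (δ * ∑ i, |l i|) *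
          P.real {ω | Real.exp (δ * ∑ i, |l i|) ≤ Real.exp (∑ i, g ω i * l i)} := by
        gcongr; exact measure_ne_top _ _
    _ ≤ ∫ ω, Real.exp (∑ i, g ω i * l i) ∂P :=
        mul_meas_ge_le_integral_of_nonneg (ae_of_all _ fun _ => (Real.exp_pos _).le) (hmgf l) _

/-- If every sign pattern of the coordinates of `g` occurs with positive
probability and `g` has finite moment generating function everywhere, then
`λ ↦ E[exp ⟨g, λ⟩]` grows at least like `c · exp (ε ‖λ‖₁)`. -/
theorem mgf_lower_bound_of_sign_patterns
    {Ω : Type*} [MeasurableSpace Ω] (P : Measure Ω) [IsProbabilityMeasure P]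
    {K : ℕ} (g : Ω → Fin K → ℝ) (hg : Measurable g)
    (hmgf : ∀ l : Fin K → ℝ, Integrable (fun ω => Real.exp (∑ i, g ω i * l i)) P)
    (hsign : ∀ s : Fin K → Bool,
      0 < P {ω | ∀ i, if s i then 0 < g ω i else g ω i < 0}) :
    ∃ ε > 0, ∃ c > 0, ∀ l : Fin K → ℝ,
      c * Real.exp (ε * ∑ i, |l i|) ≤ ∫ ω, Real.exp (∑ i, g ω i * l i) ∂P :=
  mgf_lower_bound_of_sign_patterns_general P g hmgf hsign
end

section
/- Suppose w* minimizes the KL divergence D_KL(wP ‖ P) over weight functions w = w(X_{S∩}) subject to the constraints E_P[w(X_{S∩}) τ(X_{S_1})] = ⋯ = E_P[w(X_{S∩}) τ(X_{S_K})], where at least one adjustment set S_j is valid. Then for every k = 1, ..., K, E_P[w*(X_{S∩}) τ(X_{S_k})] = E_{w*P}[Y(1) − Y(0)]. -/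
/-! The constraints make all weighted contrasts `E[w* τ(X_{S_k})]` equal, so it suffices to
evaluate one of them for a valid adjustment set `S_j`. Conditional independence of `A` and
`(Y(0), Y(1))` given `X_{S_j}` factors `E[A Y | X_{S_j}] = E[A | X_{S_j}] E[Y(1) | X_{S_j}]`, and
likewise for `1 - A`, so by overlap `τ(X_{S_j}) = E[Y(1) - Y(0) | X_{S_j}]`. As `w*` is a function
of `X_{S∩}`, hence of `X_{S_j}`, pulling it into the conditional expectation gives
`E[w* τ(X_{S_j})] = E[w* (Y(1) - Y(0))]`. -/

open MeasureTheory ProbabilityTheory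

lemma MeasureTheory.integral_mul_condExp_of_stronglyMeasurable {Ω : Type*}
    {m : MeasurableSpace Ω} [mΩ : MeasurableSpace Ω] {μ : Measure Ω} [IsFiniteMeasure μ]
    (hm : m ≤ mΩ) {w f : Ω → ℝ} (hw : StronglyMeasurable[m] w) (hf : Integrable f μ)
    (hwf : Integrable (w * f) μ) :
    ∫ ω, w ω * μ[f | m] ω ∂μ = ∫ ω, w ω * f ω ∂μ := calc
  _ = ∫ ω, μ[w * f | m] ω ∂μ :=
    integral_congr_ae (condExp_mul_of_stronglyMeasurable_left hw hwf hf).symm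
  _ = _ := integral_condExp hm

namespace ProbabilityTheory

section

variable {Ω : Type*} {m : MeasurableSpace Ω} [mΩ : MeasurableSpace Ω] [StandardBorelSpace Ω]
  {hm : m ≤ mΩ} {μ : Measure Ω} [IsFiniteMeasure μ]

lemma CondIndepFun.ae_indepFun_condExpKernel {β γ : Type*} [MeasurableSpace β]
    [MeasurableSpace γ] [MeasurableSpace.CountableOrCountablyGenerated Ω (β × γ)]
    {f : Ω → β} {g : Ω → γ} (hf : Measurable f) (hg : Measurable g)
    (h : CondIndepFun m hm f g μ) :
    ∀ᵐ ω ∂μ, IndepFun f g (condExpKernel μ m ω) := by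
  filter_upwards [ae_of_ae_trim hm ((condIndepFun_iff_map_prod_eq_prod_map_map hf hg).1 h)]
    with ω hω
  rw [indepFun_iff_map_prod_eq_prod_map_map hf.aemeasurable hg.aemeasurable]
  simpa [Kernel.map_apply _ (hf.prodMk hg), Kernel.prod_apply, Kernel.map_apply _ hf,
    Kernel.map_apply _ hg] using hω

lemma CondIndepFun.condExp_mul_ae_eq {f g : Ω → ℝ} (hf : Measurable f) (hg : Measurable g)
    (h : CondIndepFun m hm f g μ) (hfi : Integrable f μ) (hgi : Integrable g μ)
    (hfgi : Integrable (f * g) μ) :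
    μ[f * g | m] =ᵐ[μ] μ[f | m] * μ[g | m] := by
  filter_upwards [h.ae_indepFun_condExpKernel hf hg, condExp_ae_eq_integral_condExpKernel hm hfi,
    condExp_ae_eq_integral_condExpKernel hm hgi, condExp_ae_eq_integral_condExpKernel hm hfgi]
    with ω hindep hf' hg' hfg'
  rw [Pi.mul_apply, hf', hg', hfg']
  exact hindep.integral_mul_eq_mul_integral hf.aestronglyMeasurable hg.aestronglyMeasurable

lemma CondIndepFun.condExp_mul_div_ae_eq {f g : Ω → ℝ} {C : ℝ} (hf : Measurable f)
    (hg : Measurable g) (h : CondIndepFun m hm f g μ) (hfC : ∀ᵐ ω ∂μ, ‖f ω‖ ≤ C)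
    (hgi : Integrable g μ) (hf0 : ∀ᵐ ω ∂μ, μ[f | m] ω ≠ 0) :
    (fun ω => μ[f * g | m] ω / μ[f | m] ω) =ᵐ[μ] μ[g | m] := by
  have hfi : Integrable f μ := .of_bound hf.aestronglyMeasurable C hfC
  have hfgi : Integrable (f * g) μ := hgi.bdd_mul hf.aestronglyMeasurable hfC
  filter_upwards [h.condExp_mul_ae_eq hf hg hfi hgi hfgi, hf0] with ω hmul hω
  rw [hmul, Pi.mul_apply, mul_div_cancel_left₀ _ hω]

end

/-- The contrast `τ(X_S)` for `m = σ(X_S)`, via `E[Y | A = 1, X_S] = E[A Y | X_S] / E[A | X_S]`. -/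
noncomputable def regressionContrast {Ω : Type*} [MeasurableSpace Ω] (μ : Measure Ω)
    (m : MeasurableSpace Ω) (A Y : Ω → ℝ) : Ω → ℝ := fun ω =>
  μ[fun ω' => A ω' * Y ω' | m] ω / μ[A | m] ω
    - μ[fun ω' => (1 - A ω') * Y ω' | m] ω / μ[fun ω' => 1 - A ω' | m] ω

section

variable {Ω : Type*} {m : MeasurableSpace Ω} [mΩ : MeasurableSpace Ω] [StandardBorelSpace Ω]
  {hm : m ≤ mΩ} {μ : Measure Ω} [IsFiniteMeasure μ] {A Y Y0 Y1 : Ω → ℝ}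

lemma regressionContrast_ae_eq (hA : Measurable A) (hY0 : Measurable Y0) (hY1 : Measurable Y1)
    (hA01 : ∀ ω, A ω = 0 ∨ A ω = 1) (hY : ∀ ω, Y ω = A ω * Y1 ω + (1 - A ω) * Y0 ω)
    (hvalid : CondIndepFun m hm A (fun ω => (Y0 ω, Y1 ω)) μ)
    (hoverlap : ∀ᵐ ω ∂μ, 0 < μ[A | m] ω ∧ μ[A | m] ω < 1)
    (hY0i : Integrable Y0 μ) (hY1i : Integrable Y1 μ) :
    regressionContrast μ m A Y =ᵐ[μ] μ[Y1 | m] - μ[Y0 | m] := by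
  have hA_le : ∀ ω, ‖A ω‖ ≤ 1 := fun ω => by rcases hA01 ω with h | h <;> simp [h]
  have hA_compl_le : ∀ ω, ‖1 - A ω‖ ≤ 1 := fun ω => by rcases hA01 ω with h | h <;> simp [h]
  have hAY : (fun ω => A ω * Y ω) = A * Y1 := by
    funext ω; rcases hA01 ω with h | h <;> simp [h, hY ω]
  have hAY_compl : (fun ω => (1 - A ω) * Y ω) = (1 - A) * Y0 := by
    funext ω; rcases hA01 ω with h | h <;> simp [h, hY ω]
  have hcompl : μ[1 - A | m] =ᵐ[μ] 1 - μ[A | m] := by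
    have hAi : Integrable A μ := .of_bound hA.aestronglyMeasurable 1 (ae_of_all _ hA_le)
    have h1 : μ[(1 : Ω → ℝ) | m] = 1 := condExp_const hm 1
    simpa only [h1] using condExp_sub (f := 1) (integrable_const 1) hAi m
  have hIPW1 := CondIndepFun.condExp_mul_div_ae_eq hA hY1
    (hvalid.comp measurable_id measurable_snd) (ae_of_all _ hA_le) hY1i
    (hoverlap.mono fun ω hω => hω.1.ne')
  have hIPW0 := CondIndepFun.condExp_mul_div_ae_eq (f := 1 - A) (measurable_const.sub hA) hY0
    (hvalid.comp (measurable_const.sub measurable_id) measurable_fst)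
    (ae_of_all _ hA_compl_le) hY0i
    (by filter_upwards [hcompl, hoverlap] with ω h1 h2
        rw [h1, Pi.sub_apply, Pi.one_apply]; linarith [h2.2])
  have hcompl_fun : (fun ω => 1 - A ω) = 1 - A := rfl
  filter_upwards [hIPW1, hIPW0] with ω h1 h0
  rw [regressionContrast, hAY, hAY_compl, hcompl_fun]
  exact congrArg₂ (· - ·) h1 h0

lemma integral_mul_regressionContrast (hA : Measurable A) (hY0 : Measurable Y0)
    (hY1 : Measurable Y1) (hA01 : ∀ ω, A ω = 0 ∨ A ω = 1)
    (hY : ∀ ω, Y ω = A ω * Y1 ω + (1 - A ω) * Y0 ω)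
    (hvalid : CondIndepFun m hm A (fun ω => (Y0 ω, Y1 ω)) μ)
    (hoverlap : ∀ᵐ ω ∂μ, 0 < μ[A | m] ω ∧ μ[A | m] ω < 1)
    (hY0i : Integrable Y0 μ) (hY1i : Integrable Y1 μ) {w : Ω → ℝ} (hw : Measurable[m] w)
    (hwY : Integrable (fun ω => w ω * (Y1 ω - Y0 ω)) μ) :
    ∫ ω, w ω * regressionContrast μ m A Y ω ∂μ = ∫ ω, w ω * (Y1 ω - Y0 ω) ∂μ := calc
  _ = ∫ ω, w ω * μ[Y1 - Y0 | m] ω ∂μ := by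
    refine integral_congr_ae ?_
    filter_upwards [regressionContrast_ae_eq hA hY0 hY1 hA01 hY hvalid hoverlap hY0i hY1i,
      condExp_sub hY1i hY0i m] with ω hτ hsub
    rw [hτ, hsub]
  _ = _ := integral_mul_condExp_of_stronglyMeasurable hm hw.stronglyMeasurable (hY1i.sub hY0i) hwY

end

end ProbabilityTheory

theorem reweighted_estimand_is_reweighted_ate_general
    {Ω : Type*} [mΩ : MeasurableSpace Ω] [StandardBorelSpace Ω]
    (P : Measure Ω) [IsProbabilityMeasure P]
    {K : ℕ} {α : Fin K → Type*} [∀ k, MeasurableSpace (α k)] {β : Type*} [MeasurableSpace β]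
    (XS : ∀ k, Ω → α k)
    -- the common covariates `X_{S∩}` are a (measurable) function of each `X_{S_k}`
    (Xcap : Ω → β)
    (hcoarse : ∀ k, ∃ φ : α k → β, Measurable φ ∧ ∀ ω, Xcap ω = φ (XS k ω))
    (Y0 Y1 A : Ω → ℝ) (hY0 : Measurable Y0) (hY1 : Measurable Y1) (hA : Measurable A)
    (hA01 : ∀ ω, A ω = 0 ∨ A ω = 1)
    (hmle : ∀ k, MeasurableSpace.comap (XS k) inferInstance ≤ mΩ)
    -- at least one adjustment set is valid
    (hvalid : ∃ j, CondIndepFun (MeasurableSpace.comap (XS j) inferInstance) (hmle j)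
      A (fun ω => (Y0 ω, Y1 ω)) P)
    -- SUTVA
    (Y : Ω → ℝ) (hSUTVA : ∀ ω, Y ω = A ω * Y1 ω + (1 - A ω) * Y0 ω)
    -- the predictive contrasts `τ(X_{S_k})`
    (τ : Fin K → Ω → ℝ)
    (hτ : ∀ k, τ k = fun ω =>
      (P[fun ω' => A ω' * Y ω' | MeasurableSpace.comap (XS k) inferInstance]) ω
        / (P[A | MeasurableSpace.comap (XS k) inferInstance]) ω
      - (P[fun ω' => (1 - A ω') * Y ω' | MeasurableSpace.comap (XS k) inferInstance]) ω
        / (P[fun ω' => (1 - A ω') | MeasurableSpace.comap (XS k) inferInstance]) ω)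
    -- strict overlap for each adjustment set
    (hoverlap : ∀ k, ∀ᵐ ω ∂P,
      0 < (P[A | MeasurableSpace.comap (XS k) inferInstance]) ω ∧
        (P[A | MeasurableSpace.comap (XS k) inferInstance]) ω < 1)
    -- integrability
    (hY0int : Integrable Y0 P) (hY1int : Integrable Y1 P)
    -- `w*`: a weight function of `X_{S∩}`
    (wstar : Ω → ℝ)
    (hwmeas : Measurable[MeasurableSpace.comap Xcap inferInstance] wstar)
    (hwYint : Integrable (fun ω => wstar ω * (Y1 ω - Y0 ω)) P)
    -- feasibility: all constrained expectations agree
    (hfeas : ∀ k k', ∫ ω, wstar ω * τ k ω ∂P = ∫ ω, wstar ω * τ k' ω ∂P) :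
    ∀ k, ∫ ω, wstar ω * τ k ω ∂P = ∫ ω, wstar ω * (Y1 ω - Y0 ω) ∂P := by
  intro k
  obtain ⟨j, hj⟩ := hvalid
  obtain ⟨φ, hφ, hfac⟩ := hcoarse j
  have hXcap : Measurable[MeasurableSpace.comap (XS j) inferInstance] Xcap :=
    (funext hfac : Xcap = φ ∘ XS j) ▸ hφ.comp (comap_measurable (XS j))
  rw [hfeas k j, hτ j]
  exact integral_mul_regressionContrast hA hY0 hY1 hA01 hSUTVA hj (hoverlap j) hY0int hY1int
    (hwmeas.mono hXcap.comap_le le_rfl) hwYint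

/-- If `w*` minimizes the KL divergence `D_KL(wP ‖ P)` over weight functions
of the common covariates `X_{S∩}` subject to the constraints that all weighted predictive
contrasts agree, and at least one adjustment set is valid, then for every `k`,
`E[w* τ(X_{S_k})] = E_{w*P}[Y1 - Y0]`. -/
theorem reweighted_estimand_is_reweighted_ate
    {Ω : Type*} [mΩ : MeasurableSpace Ω] [StandardBorelSpace Ω] [Nonempty Ω]
    (P : Measure Ω) [IsProbabilityMeasure P]
    {K : ℕ} {α : Fin K → Type*} [∀ k, MeasurableSpace (α k)] {β : Type*} [MeasurableSpace β]
    (XS : ∀ k, Ω → α k) (hXS : ∀ k, Measurable (XS k))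
    -- the common covariates `X_{S∩}` are a (measurable) function of each `X_{S_k}`
    (Xcap : Ω → β) (hXcap : Measurable Xcap)
    (hcoarse : ∀ k, ∃ φ : α k → β, Measurable φ ∧ ∀ ω, Xcap ω = φ (XS k ω))
    (Y0 Y1 A : Ω → ℝ) (hY0 : Measurable Y0) (hY1 : Measurable Y1) (hA : Measurable A)
    (hA01 : ∀ ω, A ω = 0 ∨ A ω = 1)
    (hmle : ∀ k, MeasurableSpace.comap (XS k) inferInstance ≤ mΩ)
    -- at least one adjustment set is valid
    (hvalid : ∃ j, CondIndepFun (MeasurableSpace.comap (XS j) inferInstance) (hmle j)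
      A (fun ω => (Y0 ω, Y1 ω)) P)
    -- SUTVA
    (Y : Ω → ℝ) (hSUTVA : ∀ ω, Y ω = A ω * Y1 ω + (1 - A ω) * Y0 ω)
    -- the predictive contrasts `τ(X_{S_k})`
    (τ : Fin K → Ω → ℝ)
    (hτ : ∀ k, τ k = fun ω =>
      (P[fun ω' => A ω' * Y ω' | MeasurableSpace.comap (XS k) inferInstance]) ω
        / (P[A | MeasurableSpace.comap (XS k) inferInstance]) ω
      - (P[fun ω' => (1 - A ω') * Y ω' | MeasurableSpace.comap (XS k) inferInstance]) ω
        / (P[fun ω' => (1 - A ω') | MeasurableSpace.comap (XS k) inferInstance]) ω)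
    -- strict overlap for each adjustment set
    (hoverlap : ∀ k, ∀ᵐ ω ∂P,
      0 < (P[A | MeasurableSpace.comap (XS k) inferInstance]) ω ∧
        (P[A | MeasurableSpace.comap (XS k) inferInstance]) ω < 1)
    -- integrability
    (hY0int : Integrable Y0 P) (hY1int : Integrable Y1 P) (hYint : Integrable Y P)
    -- `w*`: a weight function of `X_{S∩}`
    (wstar : Ω → ℝ)
    (hwmeas : Measurable[MeasurableSpace.comap Xcap inferInstance] wstar)
    (hwpos : ∀ ω, 0 ≤ wstar ω) (hwmean : ∫ ω, wstar ω ∂P = 1)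
    (hwτint : ∀ k, Integrable (fun ω => wstar ω * τ k ω) P)
    (hwYint : Integrable (fun ω => wstar ω * (Y1 ω - Y0 ω)) P)
    -- feasibility: all constrained expectations agree
    (hfeas : ∀ k k', ∫ ω, wstar ω * τ k ω ∂P = ∫ ω, wstar ω * τ k' ω ∂P)
    -- KL optimality of `w*` among all feasible weight functions of `X_{S∩}`
    (hopt : ∀ w : Ω → ℝ,
      Measurable[MeasurableSpace.comap Xcap inferInstance] w →
      (∀ ω, 0 ≤ w ω) → (∫ ω, w ω ∂P = 1) →
      Integrable (fun ω => w ω * Real.log (w ω)) P →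
      (∀ k, Integrable (fun ω => w ω * τ k ω) P) →
      (∀ k k', ∫ ω, w ω * τ k ω ∂P = ∫ ω, w ω * τ k' ω ∂P) →
      ∫ ω, wstar ω * Real.log (wstar ω) ∂P ≤ ∫ ω, w ω * Real.log (w ω) ∂P) :
    ∀ k, ∫ ω, wstar ω * τ k ω ∂P = ∫ ω, wstar ω * (Y1 ω - Y0 ω) ∂P :=
  reweighted_estimand_is_reweighted_ate_general (mΩ := mΩ) P XS Xcap hcoarse Y0 Y1 A hY0 hY1 hA hA01
    hmle hvalid Y hSUTVA τ hτ hoverlap hY0int hY1int wstar hwmeas hwYint hfeas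
end
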